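/- Let M, a, s be positive integers with M > 1 such that ∑_{i=0}^{M-1} (a+i)^2 = s^2, and suppose M = 24·m₁ + 1 for a positive integer m₁. Then for every prime p > 3 with p ≢ 1 (mod 12) and p ≢ 11 (mod 12), there do not exist integers i ≥ 0 and q ≥ 1 with p ∤ q such that 24·m₁ + 1 = p^(2i+1)·q; equivalently, the exact power of p dividing M is even. -/

import Mathlib

/-!
Summing the squares gives `6 s² = M K` with `M = n + 1`, `K = 6a² + 6an + n(2n + 1)`.
If the exponent of a prime `p ∤ 6` in `M` is odd, comparing `p`-adic valuations forces `p ∣ K`;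
reducing modulo `p`, where `M ≡ 0`, gives `(6a - 3)² ≡ 3`. But by quadratic reciprocity `3` is a
square modulo a prime `p > 3` only when `p ≡ ±1 (mod 12)`.
-/

open Finset

lemma six_mul_sum_range_succ_add_sq (a n : ℕ) :
    6 * ∑ i ∈ range (n + 1), (a + i) ^ 2 = (n + 1) * (6 * a ^ 2 + 6 * a * n + n * (2 * n + 1)) := by
  induction n with
  | zero => simp
  | succ n ih =>
    rw [sum_range_succ, mul_add, ih]
    ring

lemma isSquare_three_of_eq_zero {R : Type*} [CommRing R] {a n : R} (hM : n + 1 = 0)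
    (hK : 6 * a ^ 2 + 6 * a * n + n * (2 * n + 1) = 0) : IsSquare (3 : R) :=
  ⟨6 * a - 3, by linear_combination (36 * a + 12 * n - 6) * hM - 6 * hK⟩

lemma ZMod.isSquare_natCast_iff_mod_three_ne_two (n : ℕ) : IsSquare (n : ZMod 3) ↔ n % 3 ≠ 2 := by
  rw [← ZMod.natCast_mod]
  have : n % 3 < 3 := Nat.mod_lt _ (by norm_num)
  interval_cases n % 3 <;> decide

lemma ZMod.isSquare_three_iff {p : ℕ} [Fact p.Prime] (hp2 : p ≠ 2) (hp3 : p ≠ 3) :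
    IsSquare (3 : ZMod p) ↔ p % 12 = 1 ∨ p % 12 = 11 := by
  have hodd : p % 2 = 1 := (Nat.Prime.mod_two_eq_one_iff_ne_two Fact.out).mpr hp2
  have h3 : p % 3 ≠ 0 := fun h ↦
    hp3 ((Nat.prime_dvd_prime_iff_eq Nat.prime_three Fact.out).mp (Nat.dvd_of_mod_eq_zero h)).symm
  have : Fact (Nat.Prime 3) := ⟨Nat.prime_three⟩
  rw [← Nat.cast_ofNat]
  rcases Nat.odd_mod_four_iff.mp hodd with h4 | h4
  · rw [ZMod.exists_sq_eq_prime_iff_of_mod_four_eq_one h4 (by norm_num),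
      ZMod.isSquare_natCast_iff_mod_three_ne_two]
    omega
  · rw [ZMod.exists_sq_eq_prime_iff_of_mod_four_eq_three h4 (by norm_num) hp3,
      ZMod.isSquare_natCast_iff_mod_three_ne_two]
    omega

lemma Nat.factorization_pow_mul_of_not_dvd {p q : ℕ} (hp : p.Prime) (hq : ¬ p ∣ q) (k : ℕ) :
    (p ^ k * q).factorization p = k := by
  have hq0 : q ≠ 0 := by rintro rfl; exact hq (dvd_zero p)
  rw [Nat.factorization_mul (pow_ne_zero _ hp.ne_zero) hq0, Finsupp.add_apply,
    Nat.factorization_pow, Finsupp.smul_apply, hp.factorization_self,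
    Nat.factorization_eq_zero_of_not_dvd hq, smul_eq_mul, mul_one, add_zero]

lemma Nat.Prime.dvd_of_mul_sq_eq_mul {p c s m n : ℕ} (hp : p.Prime) (hpc : ¬ p ∣ c) (hs : s ≠ 0)
    (h : c * s ^ 2 = m * n) (hm : Odd (m.factorization p)) : p ∣ n := by
  have hc : c ≠ 0 := by rintro rfl; exact hpc (dvd_zero p)
  have hmn : m * n ≠ 0 := h ▸ mul_ne_zero hc (pow_ne_zero 2 hs)
  have hval := congrArg (fun x ↦ x.factorization p) h
  simp only [Nat.factorization_mul hc (pow_ne_zero 2 hs),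
    Nat.factorization_mul (left_ne_zero_of_mul hmn) (right_ne_zero_of_mul hmn),
    Nat.factorization_pow, Finsupp.add_apply, Finsupp.smul_apply, smul_eq_mul,
    Nat.factorization_eq_zero_of_not_dvd hpc] at hval
  refine (hp.dvd_iff_one_le_factorization (right_ne_zero_of_mul hmn)).mpr ?_
  obtain ⟨k, hk⟩ := hm
  omega

theorem stmt_general (M a s m₁ : ℕ) (hs : 1 ≤ s)
    (hsum : ∑ i ∈ Finset.range M, (a + i) ^ 2 = s ^ 2)
    (hMeq : M = 24 * m₁ + 1) :
    ∀ p : ℕ, p.Prime → 3 < p → p % 12 ≠ 1 → p % 12 ≠ 11 →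
      ¬ ∃ i q : ℕ, 1 ≤ q ∧ ¬ p ∣ q ∧ 24 * m₁ + 1 = p ^ (2 * i + 1) * q := by
  rintro p hp hp3 h1 h11 ⟨i, q, -, hpq, heq⟩
  have : Fact p.Prime := ⟨hp⟩
  subst hMeq
  have hkey := six_mul_sum_range_succ_add_sq a (24 * m₁)
  rw [hsum] at hkey
  have hM : p ∣ 24 * m₁ + 1 := heq ▸ dvd_mul_of_dvd_left (dvd_pow_self p (by omega)) q
  have hp6 : ¬ p ∣ 2 * 3 := fun h ↦ by
    rcases hp.dvd_mul.mp h with h | h <;> have := Nat.le_of_dvd (by norm_num) h <;> omega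
  have hK := hp.dvd_of_mul_sq_eq_mul hp6 (by omega) hkey
    (by rw [heq, Nat.factorization_pow_mul_of_not_dvd hp hpq]; exact odd_two_mul_add_one i)
  rw [← ZMod.natCast_eq_zero_iff] at hM hK
  push_cast at hM hK
  exact (ZMod.isSquare_three_iff (by omega) (by omega)).not.mpr (by omega)
    (isSquare_three_of_eq_zero hM hK)

theorem stmt (M a s m₁ : ℕ) (hM : 1 < M) (ha : 1 ≤ a) (hs : 1 ≤ s)
    (hsum : ∑ i ∈ Finset.range M, (a + i) ^ 2 = s ^ 2)
    (hm : 1 ≤ m₁) (hMeq : M = 24 * m₁ + 1) :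
    ∀ p : ℕ, p.Prime → 3 < p → p % 12 ≠ 1 → p % 12 ≠ 11 →
      ¬ ∃ i q : ℕ, 1 ≤ q ∧ ¬ p ∣ q ∧ 24 * m₁ + 1 = p ^ (2 * i + 1) * q :=
  stmt_general M a s m₁ hs hsum hMeq
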